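/- arXiv:1301.4528 — 2 statements merged into one kernel-verified Lean document; each statement's English description precedes it below -/
import Mathlib

section
/- Let B : [0,∞) → [0,∞) be a Bernstein function with B(0)=0 satisfying B(u) ≥ c·u^(α/2) for all u ≥ u₀, where α ∈ (0,2) and c, u₀ > 0. Then for any γ > 0 there exists a constant C > 0 such that for all t > 0, 1 + (1/Γ(γ)) ∫₀^∞ u^(γ-1) e^(-t·B(u)) du ≤ C / (1 ∧ t^(2γ/α)). -/
/-!
Split the integral at `u₀`. Below `u₀` the exponential factor is at most `1`, leaving the
finite integral `∫₀^{u₀} u^(γ-1) du`. Above `u₀` the lower bound on `B` dominates the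
integrand by `u^(γ-1) e^(-t c u^(α/2))`, whose integral over `(0, ∞)` is the Gamma-type
integral `(t c)^(-2γ/α) (2/α) Γ(2γ/α)`. Hence the left side is at most `a + b t^(-2γ/α)`
with `a, b ≥ 0`, and `max 1 (t^(-2γ/α)) = 1 / min 1 (t^(2γ/α))` bounds both terms.
-/

open MeasureTheory Real Set

lemma add_mul_rpow_neg_le_div_min {a b t β : ℝ} (ha : 0 ≤ a) (hb : 0 ≤ b) (ht : 0 < t) :
    a + b * t ^ (-β) ≤ (a + b) / min 1 (t ^ β) := by
  have hmin : 0 < min 1 (t ^ β) := lt_min one_pos (rpow_pos_of_pos ht β)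
  have h_one : 1 ≤ 1 / min 1 (t ^ β) := one_le_one_div hmin (min_le_left _ _)
  have h_rpow : t ^ (-β) ≤ 1 / min 1 (t ^ β) := by
    rw [rpow_neg ht.le, inv_eq_one_div]
    exact one_div_le_one_div_of_le hmin (min_le_right _ _)
  calc a + b * t ^ (-β) ≤ a * (1 / min 1 (t ^ β)) + b * (1 / min 1 (t ^ β)) := by
        gcongr
        exact le_mul_of_one_le_right ha h_one
    _ = (a + b) / min 1 (t ^ β) := by ring

section LowerBound

variable {B : ℝ → ℝ} {γ p c u₀ t : ℝ}

lemma rpow_mul_exp_neg_mul_le_indicator_add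
    (hBnn : ∀ u, 0 ≤ u → 0 ≤ B u) (hBlow : ∀ u, u₀ ≤ u → c * u ^ p ≤ B u)
    (ht : 0 < t) {u : ℝ} (hu : 0 < u) :
    u ^ (γ - 1) * exp (-(t * B u)) ≤
      (Ioc 0 u₀).indicator (fun v => v ^ (γ - 1)) u +
        u ^ (γ - 1) * exp (-(t * c) * u ^ p) := by
  have hpow : 0 ≤ u ^ (γ - 1) := rpow_nonneg hu.le _
  rcases le_or_gt u u₀ with hle | hlt
  · have hexp : exp (-(t * B u)) ≤ 1 :=
      exp_le_one_iff.mpr (neg_nonpos.mpr (mul_nonneg ht.le (hBnn u hu.le)))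
    rw [indicator_of_mem (show u ∈ Ioc 0 u₀ from ⟨hu, hle⟩)]
    calc u ^ (γ - 1) * exp (-(t * B u)) ≤ u ^ (γ - 1) := mul_le_of_le_one_right hpow hexp
      _ ≤ _ := le_add_of_nonneg_right (by positivity)
  · rw [indicator_of_notMem (fun h => hlt.not_ge h.2), zero_add]
    gcongr
    linarith [mul_le_mul_of_nonneg_left (hBlow u hlt.le) ht.le]

lemma setIntegral_rpow_mul_exp_neg_mul_le (hBmeas : Measurable B)
    (hBnn : ∀ u, 0 ≤ u → 0 ≤ B u) (hBlow : ∀ u, u₀ ≤ u → c * u ^ p ≤ B u)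
    (hγ : 0 < γ) (hp : 0 < p) (hc : 0 < c) (ht : 0 < t) :
    ∫ u in Ioi 0, u ^ (γ - 1) * exp (-(t * B u)) ≤
      (∫ u in Ioc 0 u₀, u ^ (γ - 1)) +
        c ^ (-(γ / p)) * (1 / p) * Gamma (γ / p) * t ^ (-(γ / p)) := by
  have hγ1 : -1 < γ - 1 := by linarith
  have h_small : IntegrableOn (fun v : ℝ => v ^ (γ - 1)) (Ioc 0 u₀) :=
    (intervalIntegral.intervalIntegrable_rpow' hγ1).1
  have h_large : IntegrableOn (fun u : ℝ => u ^ (γ - 1) * exp (-(t * c) * u ^ p)) (Ioi 0) :=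
    integrableOn_rpow_mul_exp_neg_mul_rpow hγ1 hp (by positivity)
  have h_bound : ∀ u ∈ Ioi (0 : ℝ), u ^ (γ - 1) * exp (-(t * B u)) ≤
      (Ioc 0 u₀).indicator (fun v => v ^ (γ - 1)) u + u ^ (γ - 1) * exp (-(t * c) * u ^ p) :=
    fun u hu => rpow_mul_exp_neg_mul_le_indicator_add hBnn hBlow ht hu
  have h_dom := (h_small.integrable_indicator measurableSet_Ioc).integrableOn.add h_large
  have h_int : IntegrableOn (fun u : ℝ => u ^ (γ - 1) * exp (-(t * B u))) (Ioi 0) := by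
    refine h_dom.mono' (((measurable_id.pow_const _).mul
      (hBmeas.const_mul t).neg.exp).aestronglyMeasurable) ?_
    filter_upwards [ae_restrict_mem measurableSet_Ioi] with u hu
    rw [norm_of_nonneg (mul_nonneg (rpow_nonneg (le_of_lt hu) _) (exp_nonneg _))]
    exact h_bound u hu
  calc ∫ u in Ioi 0, u ^ (γ - 1) * exp (-(t * B u))
      ≤ ∫ u in Ioi 0, ((Ioc 0 u₀).indicator (fun v => v ^ (γ - 1)) u +
          u ^ (γ - 1) * exp (-(t * c) * u ^ p)) :=
        setIntegral_mono_on h_int h_dom measurableSet_Ioi h_bound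
    _ = _ := by
      rw [integral_add (h_small.integrable_indicator measurableSet_Ioc).integrableOn h_large,
        setIntegral_indicator measurableSet_Ioc, inter_eq_right.mpr Ioc_subset_Ioi_self,
        integral_rpow_mul_exp_neg_mul_rpow hp hγ1 (by positivity), sub_add_cancel, neg_div,
        mul_rpow ht.le hc.le]
      ring

end LowerBound

theorem stmt0_general (B : ℝ → ℝ) (α c u₀ : ℝ)
    (hBmeas : Measurable B) (hBnn : ∀ u, 0 ≤ u → 0 ≤ B u)
    (hα0 : 0 < α) (hc : 0 < c)
    (hBlow : ∀ u, u₀ ≤ u → c * u ^ (α / 2) ≤ B u) :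
    ∀ γ > (0 : ℝ), ∃ C > (0 : ℝ), ∀ t > (0 : ℝ),
      1 + (1 / Real.Gamma γ) *
          ∫ u in Set.Ioi (0 : ℝ), u ^ (γ - 1) * Real.exp (-(t * B u))
        ≤ C / min 1 (t ^ (2 * γ / α)) := by
  intro γ hγ
  have hβ : γ / (α / 2) = 2 * γ / α := by field_simp
  set A := ∫ u in Ioc 0 u₀, u ^ (γ - 1)
  set K := c ^ (-(2 * γ / α)) * (1 / (α / 2)) * Gamma (2 * γ / α)
  have hA : 0 ≤ A := setIntegral_nonneg measurableSet_Ioc fun u hu => rpow_nonneg hu.1.le _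
  have hK : 0 ≤ K := by positivity
  have hΓ : 0 < 1 / Gamma γ := one_div_pos.mpr (Gamma_pos_of_pos hγ)
  refine ⟨(1 + 1 / Gamma γ * A) + 1 / Gamma γ * K, by positivity, fun t ht => ?_⟩
  have hI := setIntegral_rpow_mul_exp_neg_mul_le hBmeas hBnn hBlow hγ (by positivity) hc ht
  rw [hβ] at hI
  calc 1 + 1 / Gamma γ * ∫ u in Ioi 0, u ^ (γ - 1) * exp (-(t * B u))
      ≤ 1 + 1 / Gamma γ * (A + K * t ^ (-(2 * γ / α))) := by gcongr
    _ = (1 + 1 / Gamma γ * A) + 1 / Gamma γ * K * t ^ (-(2 * γ / α)) := by ring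
    _ ≤ _ := add_mul_rpow_neg_le_div_min (by positivity) (by positivity) ht

/-- If a Bernstein function `B` satisfies `B u ≥ c * u^(α/2)` for `u ≥ u₀`, then for any
`γ > 0` there is `C > 0` with `1 + Γ(γ)⁻¹ ∫₀^∞ u^(γ-1) e^(-t B u) du ≤ C / (1 ∧ t^(2γ/α))`
for all `t > 0`. -/
theorem stmt0 (B : ℝ → ℝ) (α c u₀ : ℝ)
    (hBmeas : Measurable B) (hBnn : ∀ u, 0 ≤ u → 0 ≤ B u) (hB0 : B 0 = 0)
    (hα0 : 0 < α) (hα2 : α < 2) (hc : 0 < c) (hu₀ : 0 < u₀)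
    (hBlow : ∀ u, u₀ ≤ u → c * u ^ (α / 2) ≤ B u) :
    ∀ γ > (0 : ℝ), ∃ C > (0 : ℝ), ∀ t > (0 : ℝ),
      1 + (1 / Real.Gamma γ) *
          ∫ u in Set.Ioi (0 : ℝ), u ^ (γ - 1) * Real.exp (-(t * B u))
        ≤ C / min 1 (t ^ (2 * γ / α)) :=
  stmt0_general B α c u₀ hBmeas hBnn hα0 hc hBlow
end

section
/- Let ℓ : [0,1] → [0,∞) be càdlàg increasing, β : [0,∞) → [0,∞) absolutely continuous increasing with β₀ = 0 and locally bounded derivative, and λ_t := ∫₀^t |β̇_s|² ds. Let ℓ^ε_t := Σ_{s ≤ t} Δℓ_s 1{Δℓ_s ≥ ε}. Then lim_{ε↓0} ∫₀^1 ((λ_{ℓ_{s−}} − λ_{ℓ^ε_{s−}}) + (λ_{ℓ_s} − λ_{ℓ^ε_s})) / (ℓ_s − ℓ_{s−}) · 1{ℓ_{s−} ≤ ℓ^ε_s} dℓ_s = 0, where the integrand is interpreted as 0 when Δℓ_s = 0. -/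
open MeasureTheory Filter Function Set

/-- The big-jump truncation `ℓᵉ t = Σ_{0 < u ≤ t, Δℓ_u ≥ ε} Δℓ_u` of a purely-jump
increasing càdlàg function `ℓ`. -/
noncomputable def bigJumpPart (ℓ : ℝ → ℝ) (ε t : ℝ) : ℝ :=
  ∑' u : Set.Ioc (0:ℝ) t,
    if ε ≤ ℓ (u : ℝ) - Function.leftLim ℓ (u : ℝ)
      then ℓ (u : ℝ) - Function.leftLim ℓ (u : ℝ) else 0

/-!
Wherever the integrand is nonzero, `ℓ_{s-} ≤ ℓᵉ_s ≤ ℓ_s` and `ℓᵉ_s - ℓᵉ_{s-} ≤ Δℓ_s`, so the two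
arguments of each difference of `λ` are within `Δℓ_s` of each other; as `λ` is Lipschitz with
constant `sup |β̇|²` on `[0, ℓ_1]`, the integrand is bounded by `2 sup |β̇|²`. Both `ℓᵉ_s` and
`ℓᵉ_{s-}` are sums of jumps converging to `ℓ_s` and `ℓ_{s-}` as `ε ↓ 0` (dominated convergence for
series), so the integrand tends to `0` pointwise, and dominated convergence for the finite measure
`dℓ` on `(0, 1]` concludes.
-/

open Topology
open scoped NNReal

noncomputable def jumpSum (g : ℝ → ℝ) (t : ℝ) : ℝ :=
  ∑' u : Ioc (0:ℝ) t, g u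

noncomputable def dropBelow (ε x : ℝ) : ℝ :=
  if ε ≤ x then x else 0

section DropBelow

variable {ε x : ℝ}

theorem dropBelow_nonneg (hx : 0 ≤ x) : 0 ≤ dropBelow ε x := by
  unfold dropBelow; split_ifs <;> simp [hx]

theorem dropBelow_le (hx : 0 ≤ x) : dropBelow ε x ≤ x := by
  unfold dropBelow; split_ifs <;> simp [hx]

theorem tendsto_dropBelow (hx : 0 ≤ x) :
    Tendsto (dropBelow · x) (𝓝[>] 0) (𝓝 x) := by
  rcases hx.eq_or_lt with rfl | hx
  · simp only [dropBelow, ite_self, tendsto_const_nhds]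
  · refine tendsto_const_nhds.congr' ?_
    filter_upwards [Ioo_mem_nhdsGT hx] with ε hε
    exact (if_pos hε.2.le).symm

theorem summable_dropBelow {ι : Type*} {f : ι → ℝ} (hf0 : ∀ i, 0 ≤ f i) (hf : Summable f)
    (ε : ℝ) : Summable fun i => dropBelow ε (f i) :=
  hf.of_nonneg_of_le (fun i => dropBelow_nonneg (hf0 i)) fun i => dropBelow_le (hf0 i)

end DropBelow

section JumpSum

variable {g : ℝ → ℝ}

theorem jumpSum_nonneg (hg : ∀ u, 0 ≤ g u) (t : ℝ) : 0 ≤ jumpSum g t :=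
  tsum_nonneg fun u => hg u

theorem jumpSum_le_jumpSum {g' : ℝ → ℝ} (hg : ∀ u, 0 ≤ g u) (hgg' : ∀ u, g u ≤ g' u) {t : ℝ}
    (hg' : Summable fun u : Ioc (0:ℝ) t => g' u) : jumpSum g t ≤ jumpSum g' t :=
  (Summable.of_nonneg_of_le (f := fun u : Ioc (0:ℝ) t => g' u) (fun u => hg u) (fun u => hgg' u)
    hg').tsum_le_tsum (fun u => hgg' u) hg'

theorem monotone_jumpSum (hg : ∀ u, 0 ≤ g u)
    (hsum : ∀ t, Summable fun u : Ioc (0:ℝ) t => g u) : Monotone (jumpSum g) := by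
  intro t t' htt'
  simp only [jumpSum, tsum_subtype]
  exact Summable.tsum_le_tsum (indicator_le_indicator_of_subset (Ioc_subset_Ioc_right htt') hg)
    (summable_subtype_iff_indicator.1 (hsum t)) (summable_subtype_iff_indicator.1 (hsum t'))

theorem leftLim_jumpSum (hg : ∀ u, 0 ≤ g u) (hsum : ∀ t, Summable fun u : Ioc (0:ℝ) t => g u)
    (s : ℝ) : leftLim (jumpSum g) s = ∑' u, (Ioo 0 s).indicator g u := by
  refine leftLim_eq_of_tendsto ?_
  rw [show jumpSum g = fun t => ∑' u, (Ioc 0 t).indicator g u from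
    funext fun t => tsum_subtype _ _]
  refine tendsto_tsum_of_dominated_convergence (summable_subtype_iff_indicator.1 (hsum s))
    (fun u => tendsto_const_nhds.congr' ?_) ?_
  · have hu : ∀ᶠ t in 𝓝[<] s, u < s → u ≤ t := by
      by_cases hus : u < s
      · filter_upwards [Ioo_mem_nhdsLT hus] with t ht using fun _ => ht.1.le
      · exact Eventually.of_forall fun _ h => absurd h hus
    filter_upwards [hu, self_mem_nhdsWithin] with t hut (hts : t < s)
    have hmem : u ∈ Ioo 0 s ↔ u ∈ Ioc 0 t :=
      ⟨fun h => ⟨h.1, hut h.2⟩, fun h => ⟨h.1, h.2.trans_lt hts⟩⟩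
    simp only [indicator_apply, hmem]
  · filter_upwards [self_mem_nhdsWithin] with t (hts : t < s) u
    rw [Real.norm_of_nonneg (indicator_nonneg (fun u _ => hg u) u)]
    exact indicator_le_indicator_of_subset (Ioc_subset_Ioc_right hts.le) hg u

theorem jumpSum_eq_leftLim_add (hg : ∀ u, 0 ≤ g u)
    (hsum : ∀ t, Summable fun u : Ioc (0:ℝ) t => g u) {s : ℝ} (hs : 0 < s) :
    jumpSum g s = leftLim (jumpSum g) s + g s := by
  classical
  rw [leftLim_jumpSum hg hsum, jumpSum, tsum_subtype,
    (summable_subtype_iff_indicator.1 (hsum s)).tsum_eq_add_tsum_ite s,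
    indicator_of_mem (right_mem_Ioc.2 hs), add_comm]
  congr 2 with u
  by_cases hu : u = s
  · simp [hu]
  · simp [hu, indicator_apply, lt_iff_le_and_ne]

theorem tendsto_jumpSum_dropBelow (hg : ∀ u, 0 ≤ g u) {t : ℝ}
    (hsum : Summable fun u : Ioc (0:ℝ) t => g u) :
    Tendsto (fun ε => jumpSum (fun u => dropBelow ε (g u)) t) (𝓝[>] 0) (𝓝 (jumpSum g t)) :=
  tendsto_tsum_of_dominated_convergence hsum (fun u => tendsto_dropBelow (hg u))
    (Eventually.of_forall fun ε u => by
      rw [Real.norm_of_nonneg (dropBelow_nonneg (hg u))]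
      exact dropBelow_le (hg u))

end JumpSum

section BigJumpPart

variable {ℓ : ℝ → ℝ}

theorem Monotone.sub_leftLim_nonneg (hℓ : Monotone ℓ) (u : ℝ) : 0 ≤ ℓ u - leftLim ℓ u :=
  sub_nonneg.2 (hℓ.leftLim_le le_rfl)

theorem dropBelow_sub_leftLim_nonneg (hℓ : Monotone ℓ) (ε u : ℝ) :
    0 ≤ dropBelow ε (ℓ u - leftLim ℓ u) :=
  dropBelow_nonneg (hℓ.sub_leftLim_nonneg u)

theorem summable_dropBelow_sub_leftLim (hℓ : Monotone ℓ)
    (hsum : ∀ t, Summable fun u : Ioc (0:ℝ) t => ℓ u - leftLim ℓ u) (ε t : ℝ) :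
    Summable fun u : Ioc (0:ℝ) t => dropBelow ε (ℓ u - leftLim ℓ u) :=
  summable_dropBelow (fun u : Ioc (0:ℝ) t => hℓ.sub_leftLim_nonneg u) (hsum t) ε

theorem bigJumpPart_eq_jumpSum (ℓ : ℝ → ℝ) (ε : ℝ) :
    bigJumpPart ℓ ε = jumpSum fun u => dropBelow ε (ℓ u - leftLim ℓ u) :=
  rfl

theorem monotone_bigJumpPart (hℓ : Monotone ℓ)
    (hsum : ∀ t, Summable fun u : Ioc (0:ℝ) t => ℓ u - leftLim ℓ u) (ε : ℝ) :
    Monotone (bigJumpPart ℓ ε) :=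
  monotone_jumpSum (dropBelow_sub_leftLim_nonneg hℓ ε)
    (summable_dropBelow_sub_leftLim hℓ hsum ε)

theorem bigJumpPart_le (hℓ : Monotone ℓ)
    (hsum : ∀ t, Summable fun u : Ioc (0:ℝ) t => ℓ u - leftLim ℓ u)
    (hpure : ∀ t, 0 ≤ t → ℓ t = jumpSum (fun u => ℓ u - leftLim ℓ u) t) (ε : ℝ) {t : ℝ}
    (ht : 0 ≤ t) : bigJumpPart ℓ ε t ≤ ℓ t := by
  rw [hpure t ht]
  exact jumpSum_le_jumpSum (dropBelow_sub_leftLim_nonneg hℓ ε)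
    (fun u => dropBelow_le (hℓ.sub_leftLim_nonneg u)) (hsum t)

theorem bigJumpPart_sub_leftLim_le (hℓ : Monotone ℓ)
    (hsum : ∀ t, Summable fun u : Ioc (0:ℝ) t => ℓ u - leftLim ℓ u) (ε : ℝ) {s : ℝ}
    (hs : 0 < s) : bigJumpPart ℓ ε s - leftLim (bigJumpPart ℓ ε) s ≤ ℓ s - leftLim ℓ s := by
  rw [bigJumpPart_eq_jumpSum, jumpSum_eq_leftLim_add
    (dropBelow_sub_leftLim_nonneg hℓ ε)
    (summable_dropBelow_sub_leftLim hℓ hsum ε) hs,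
    add_sub_cancel_left]
  exact dropBelow_le (hℓ.sub_leftLim_nonneg s)

theorem tendsto_bigJumpPart (hℓ : Monotone ℓ)
    (hsum : ∀ t, Summable fun u : Ioc (0:ℝ) t => ℓ u - leftLim ℓ u)
    (hpure : ∀ t, 0 ≤ t → ℓ t = jumpSum (fun u => ℓ u - leftLim ℓ u) t) {s : ℝ} (hs : 0 ≤ s) :
    Tendsto (bigJumpPart ℓ · s) (𝓝[>] 0) (𝓝 (ℓ s)) := by
  rw [hpure s hs]
  exact tendsto_jumpSum_dropBelow hℓ.sub_leftLim_nonneg (hsum s)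

theorem tendsto_leftLim_bigJumpPart (hℓ : Monotone ℓ)
    (hsum : ∀ t, Summable fun u : Ioc (0:ℝ) t => ℓ u - leftLim ℓ u)
    (hpure : ∀ t, 0 ≤ t → ℓ t = jumpSum (fun u => ℓ u - leftLim ℓ u) t) {s : ℝ} (hs : 0 < s) :
    Tendsto (fun ε => leftLim (bigJumpPart ℓ ε) s) (𝓝[>] 0) (𝓝 (leftLim ℓ s)) := by
  have hleftLim : ∀ ε, leftLim (bigJumpPart ℓ ε) s
      = bigJumpPart ℓ ε s - dropBelow ε (ℓ s - leftLim ℓ s) := fun ε =>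
    eq_sub_of_add_eq (jumpSum_eq_leftLim_add (dropBelow_sub_leftLim_nonneg hℓ ε)
      (summable_dropBelow_sub_leftLim hℓ hsum ε) hs).symm
  simpa only [hleftLim, sub_sub_cancel] using
    (tendsto_bigJumpPart hℓ hsum hpure hs.le).sub (tendsto_dropBelow (hℓ.sub_leftLim_nonneg s))

theorem jumpValues_mem_Icc (hℓ : Monotone ℓ)
    (hsum : ∀ t, Summable fun u : Ioc (0:ℝ) t => ℓ u - leftLim ℓ u)
    (hpure : ∀ t, 0 ≤ t → ℓ t = jumpSum (fun u => ℓ u - leftLim ℓ u) t) (ε : ℝ) {s t : ℝ}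
    (hs : s ∈ Ioc 0 t) :
    leftLim ℓ s ∈ Icc 0 (ℓ t) ∧ leftLim (bigJumpPart ℓ ε) s ∈ Icc 0 (ℓ t) ∧
      ℓ s ∈ Icc 0 (ℓ t) ∧ bigJumpPart ℓ ε s ∈ Icc 0 (ℓ t) := by
  have hℓ0 : 0 ≤ ℓ 0 := hpure 0 le_rfl ▸ jumpSum_nonneg hℓ.sub_leftLim_nonneg 0
  have hB0 : 0 ≤ bigJumpPart ℓ ε 0 :=
    jumpSum_nonneg (dropBelow_sub_leftLim_nonneg hℓ ε) 0
  have hB := monotone_bigJumpPart hℓ hsum ε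
  have hBℓ := bigJumpPart_le hℓ hsum hpure ε hs.1.le
  have hℓs : ℓ s ≤ ℓ t := hℓ hs.2
  exact ⟨⟨hℓ0.trans (hℓ.le_leftLim hs.1), (hℓ.leftLim_le le_rfl).trans hℓs⟩,
    ⟨hB0.trans (hB.le_leftLim hs.1), ((hB.leftLim_le le_rfl).trans hBℓ).trans hℓs⟩,
    ⟨hℓ0.trans (hℓ hs.1.le), hℓs⟩, ⟨hB0.trans (hB hs.1.le), hBℓ.trans hℓs⟩⟩

end BigJumpPart

/-- The integrand of the theorem at a point `s`, with `a, b, c, d` standing for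
`ℓ_{s-}, ℓᵉ_{s-}, ℓ_s, ℓᵉ_s`. -/
noncomputable def jumpIntegrand (L : ℝ → ℝ) (a b c d : ℝ) : ℝ :=
  if a = c then 0 else ((L a - L b) + (L c - L d)) / (c - a) * (if a ≤ d then 1 else 0)

section JumpIntegrand

variable {L : ℝ → ℝ} {a b c d : ℝ}

theorem jumpIntegrand_congr {L' : ℝ → ℝ} {S : Set ℝ} (h : EqOn L L' S) (ha : a ∈ S) (hb : b ∈ S)
    (hc : c ∈ S) (hd : d ∈ S) : jumpIntegrand L a b c d = jumpIntegrand L' a b c d := by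
  simp only [jumpIntegrand, h ha, h hb, h hc, h hd]

theorem measurable_jumpIntegrand {α : Type*} [MeasurableSpace α] (hL : Measurable L)
    {a b c d : α → ℝ} (ha : Measurable a) (hb : Measurable b) (hc : Measurable c)
    (hd : Measurable d) : Measurable fun s => jumpIntegrand L (a s) (b s) (c s) (d s) :=
  Measurable.ite (measurableSet_eq_fun ha hc) measurable_const <|
    ((((hL.comp ha).sub (hL.comp hb)).add ((hL.comp hc).sub (hL.comp hd))).div (hc.sub ha)).mul
      (Measurable.ite (measurableSet_le ha hd) measurable_const measurable_const)

theorem abs_jumpIntegrand_le {C : ℝ≥0} (hL : LipschitzWith C L) (hdc : d ≤ c) (hbd : b ≤ d)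
    (hjump : d - b ≤ c - a) : |jumpIntegrand L a b c d| ≤ 2 * C := by
  unfold jumpIntegrand
  split_ifs with hac had
  · simp
  · have hca : 0 < c - a := sub_pos.2 (lt_of_le_of_ne (had.trans hdc) hac)
    have hLip : ∀ x y, |x - y| ≤ c - a → |L x - L y| ≤ C * (c - a) := fun x y h => by
      rw [← Real.dist_eq] at h ⊢
      exact (hL.dist_le_mul x y).trans (mul_le_mul_of_nonneg_left h C.2)
    have hab := hLip a b (abs_le.2 ⟨by linarith, by linarith⟩)
    have hcd := hLip c d (abs_le.2 ⟨by linarith, by linarith⟩)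
    rw [mul_one, abs_div, abs_of_pos hca, div_le_iff₀ hca]
    linarith [abs_add_le (L a - L b) (L c - L d)]
  · simp

theorem tendsto_jumpIntegrand {α : Type*} {l : Filter α} {b d : α → ℝ} (hLa : ContinuousAt L a)
    (hLc : ContinuousAt L c) (hac : a ≤ c) (hb : Tendsto b l (𝓝 a)) (hd : Tendsto d l (𝓝 c)) :
    Tendsto (fun i => jumpIntegrand L a (b i) c (d i)) l (𝓝 0) := by
  rcases hac.eq_or_lt with rfl | hac
  · simp [jumpIntegrand, tendsto_const_nhds]
  have hlim : Tendsto (fun i => ((L a - L (b i)) + (L c - L (d i))) / (c - a)) l (𝓝 0) := by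
    simpa using (((tendsto_const_nhds (x := L a)).sub (hLa.tendsto.comp hb)).add
      ((tendsto_const_nhds (x := L c)).sub (hLc.tendsto.comp hd))).div_const (c - a)
  refine hlim.congr' ?_
  filter_upwards [hd.eventually (eventually_gt_nhds hac)] with i hi
  simp [jumpIntegrand, hac.ne, hi.le]

end JumpIntegrand

theorem lipschitzOnWith_primitive {E : Type*} [NormedAddCommGroup E] [NormedSpace ℝ E]
    {f : ℝ → E} (hf : AEStronglyMeasurable f) {a b : ℝ} {M : ℝ≥0}
    (hM : ∀ x ∈ Icc a b, ‖f x‖ ≤ M) : LipschitzOnWith M (fun t => ∫ x in a..t, f x) (Icc a b) := by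
  have hint : ∀ t ∈ Icc a b, IntervalIntegrable f volume a t := fun t ht =>
    (intervalIntegrable_iff_integrableOn_Ioc_of_le ht.1).2 <|
      Measure.integrableOn_of_bounded measure_Ioc_lt_top.ne hf <|
        ae_restrict_of_forall_mem measurableSet_Ioc fun x hx =>
          hM x ⟨hx.1.le, hx.2.trans ht.2⟩
  refine LipschitzOnWith.of_dist_le_mul fun x hx y hy => ?_
  rw [dist_eq_norm, intervalIntegral.integral_interval_sub_left (hint x hx) (hint y hy),
    Real.dist_eq]
  exact intervalIntegral.norm_integral_le_of_norm_le_const fun z hz =>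
    hM z (uIcc_subset_Icc hy hx (uIoc_subset_uIcc hz))

theorem tendsto_integral_jumpIntegrand {Λ : ℝ → ℝ} {C : ℝ≥0} (hΛ : LipschitzWith C Λ)
    (ℓ : StieltjesFunction ℝ)
    (hsum : ∀ t, Summable fun u : Ioc (0:ℝ) t => ℓ u - leftLim ℓ u)
    (hpure : ∀ t, 0 ≤ t → ℓ t = jumpSum (fun u => ℓ u - leftLim ℓ u) t) (T : ℝ) :
    Tendsto (fun ε => ∫ s in Ioc 0 T, jumpIntegrand Λ (leftLim ℓ s)
      (leftLim (bigJumpPart ℓ ε) s) (ℓ s) (bigJumpPart ℓ ε s) ∂ℓ.measure) (𝓝[>] 0) (𝓝 0) := by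
  have hB := monotone_bigJumpPart ℓ.mono hsum
  have : IsFiniteMeasure (ℓ.measure.restrict (Ioc 0 T)) :=
    isFiniteMeasure_restrict.2 measure_Ioc_lt_top.ne
  simpa using tendsto_integral_filter_of_dominated_convergence (fun _ => 2 * (C : ℝ))
    (Eventually.of_forall fun ε => (measurable_jumpIntegrand hΛ.continuous.measurable
      ℓ.mono.leftLim.measurable (hB ε).leftLim.measurable ℓ.mono.measurable
      (hB ε).measurable).aestronglyMeasurable)
    (Eventually.of_forall fun ε => ae_restrict_of_forall_mem measurableSet_Ioc fun s hs =>
      abs_jumpIntegrand_le hΛ (bigJumpPart_le ℓ.mono hsum hpure ε hs.1.le)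
        ((hB ε).leftLim_le le_rfl) (bigJumpPart_sub_leftLim_le ℓ.mono hsum ε hs.1))
    (integrable_const _)
    (ae_restrict_of_forall_mem measurableSet_Ioc fun s hs =>
      tendsto_jumpIntegrand hΛ.continuous.continuousAt hΛ.continuous.continuousAt
        (ℓ.mono.leftLim_le le_rfl) (tendsto_leftLim_bigJumpPart ℓ.mono hsum hpure hs.1)
        (tendsto_bigJumpPart ℓ.mono hsum hpure hs.1.le))

theorem stmt7_general (ℓ : StieltjesFunction ℝ)
    (hsummable : ∀ t : ℝ,
      Summable (fun u : Set.Ioc (0:ℝ) t => ℓ (u : ℝ) - Function.leftLim ℓ (u : ℝ)))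
    (hpurejump : ∀ t : ℝ, 0 ≤ t →
      ℓ t = ∑' u : Set.Ioc (0:ℝ) t, (ℓ (u : ℝ) - Function.leftLim ℓ (u : ℝ)))
    (βdot lam : ℝ → ℝ) (hβmeas : Measurable βdot)
    (hβbdd : ∀ K : ℝ, 0 < K → ∃ M, ∀ s ∈ Set.Icc (0:ℝ) K, |βdot s| ≤ M)
    (hlam : ∀ t, lam t = ∫ s in (0:ℝ)..t, (βdot s) ^ 2) :
    Tendsto (fun ε : ℝ =>
        ∫ s in Set.Ioc (0:ℝ) 1,
          (if Function.leftLim ℓ s = ℓ s then 0 else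
            ((lam (Function.leftLim ℓ s) - lam (Function.leftLim (bigJumpPart ℓ ε) s))
                + (lam (ℓ s) - lam (bigJumpPart ℓ ε s)))
              / (ℓ s - Function.leftLim ℓ s)
              * (if Function.leftLim ℓ s ≤ bigJumpPart ℓ ε s then 1 else 0))
          ∂ℓ.measure)
      (nhdsWithin 0 (Set.Ioi 0)) (nhds 0) := by
  change Tendsto (fun ε => ∫ s in Ioc 0 1, jumpIntegrand lam (leftLim ℓ s)
    (leftLim (bigJumpPart ℓ ε) s) (ℓ s) (bigJumpPart ℓ ε s) ∂ℓ.measure) _ _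
  obtain ⟨M, hM⟩ := hβbdd (max (ℓ 1) 1) (lt_max_of_lt_right one_pos)
  have hlamLip : LipschitzOnWith ⟨M ^ 2, sq_nonneg M⟩ lam (Icc 0 (max (ℓ 1) 1)) := by
    simp only [funext hlam]
    refine lipschitzOnWith_primitive (hβmeas.pow_const 2).aestronglyMeasurable fun s hs => ?_
    rw [norm_pow, Real.norm_eq_abs]
    exact pow_le_pow_left₀ (abs_nonneg _) (hM s hs) 2
  -- All four arguments of the integrand lie in `[0, ℓ 1]`, so `lam` may be replaced there by
  -- a globally Lipschitz extension.
  obtain ⟨Λ, hΛ, hlamΛ⟩ := hlamLip.extend_real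
  refine (tendsto_integral_jumpIntegrand hΛ ℓ hsummable hpurejump 1).congr fun ε =>
    setIntegral_congr_fun measurableSet_Ioc fun s hs => ?_
  obtain ⟨h₁, h₂, h₃, h₄⟩ := jumpValues_mem_Icc ℓ.mono hsummable hpurejump ε hs
  exact (jumpIntegrand_congr (hlamΛ.mono (Icc_subset_Icc_right (le_max_left _ _))) h₁ h₂ h₃ h₄).symm

/-- The limit `I₂` in the proof of Lemma 2.2: for a purely-jump increasing càdlàg `ℓ` and
`λ t = ∫₀^t |β̇ s|² ds` with `β̇` locally bounded,
`lim_{ε↓0} ∫₀^1 ((λ_{ℓ_{s-}} − λ_{ℓᵉ_{s-}}) + (λ_{ℓ_s} − λ_{ℓᵉ_s}))/(ℓ_s − ℓ_{s-})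
· 1_{ℓ_{s-} ≤ ℓᵉ_s} dℓ_s = 0`, the integrand being `0` when `Δℓ_s = 0`. -/
theorem stmt7 (ℓ : StieltjesFunction ℝ) (hℓ0 : ℓ 0 = 0) (hℓnn : ∀ t, 0 ≤ ℓ t)
    (hsummable : ∀ t : ℝ,
      Summable (fun u : Set.Ioc (0:ℝ) t => ℓ (u : ℝ) - Function.leftLim ℓ (u : ℝ)))
    (hpurejump : ∀ t : ℝ, 0 ≤ t →
      ℓ t = ∑' u : Set.Ioc (0:ℝ) t, (ℓ (u : ℝ) - Function.leftLim ℓ (u : ℝ)))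
    (βdot lam : ℝ → ℝ) (hβmeas : Measurable βdot)
    (hβbdd : ∀ K : ℝ, 0 < K → ∃ M, ∀ s ∈ Set.Icc (0:ℝ) K, |βdot s| ≤ M)
    (hlam : ∀ t, lam t = ∫ s in (0:ℝ)..t, (βdot s) ^ 2) :
    Tendsto (fun ε : ℝ =>
        ∫ s in Set.Ioc (0:ℝ) 1,
          (if Function.leftLim ℓ s = ℓ s then 0 else
            ((lam (Function.leftLim ℓ s) - lam (Function.leftLim (bigJumpPart ℓ ε) s))
                + (lam (ℓ s) - lam (bigJumpPart ℓ ε s)))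
              / (ℓ s - Function.leftLim ℓ s)
              * (if Function.leftLim ℓ s ≤ bigJumpPart ℓ ε s then 1 else 0))
          ∂ℓ.measure)
      (nhdsWithin 0 (Set.Ioi 0)) (nhds 0) :=
  stmt7_general ℓ hsummable hpurejump βdot lam hβmeas hβbdd hlam
end
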